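/- Let f : ℝ^d → ℝ be twice continuously differentiable with L2-Lipschitz Hessian. Let x ∈ ℝ^d and let v be a unit vector with v ᵀ∇²f(x)v ≤ 0. Set η = (2·|vᵀ∇²f(x)v|/L2)·sign(vᵀ∇f(x)) and x⁺ = x − η·v. Then the negative-curvature step satisfies f(x) − f(x⁺) ≥ 2·|vᵀ∇²f(x)v|³/(3·L2²). -/

import Mathlib

/-!
On the segment `t ↦ x + t • u`, Lipschitz continuity of the Hessian bounds the second derivative
of `f` by its value at `t = 0` plus `L‖u‖³t`; integrating this twice (by the comparison principle)
gives the cubic model `f (x + u) ≤ f x + ⟪∇f x, u⟫ + ⟪∇²f x u, u⟫ / 2 + L‖u‖³ / 6`.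
For `u = -η • v` the linear term is `≤ 0` because `η` has the sign of `⟪∇f x, v⟫`, and with
`μ = |⟪∇²f x v, v⟫|` the step length `c = 2μ / L` minimises the rest, `-μc²/2 + Lc³/6`,
at the value `-2μ³ / (3L²)`.
-/

open scoped RealInnerProductSpace

noncomputable def sgn (t : ℝ) : ℝ := if 0 ≤ t then 1 else -1

open Set

theorem image_le_of_hasDerivAt_le {a b : ℝ} {φ φ' B B' : ℝ → ℝ}
    (hφ : ∀ t, HasDerivAt φ (φ' t) t) (hB : ∀ t, HasDerivAt B (B' t) t)
    (ha : φ a ≤ B a) (hle : ∀ t ∈ Ico a b, φ' t ≤ B' t) :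
    ∀ t ∈ Icc a b, φ t ≤ B t :=
  image_le_of_deriv_right_le_deriv_boundary
    (fun t _ => (hφ t).continuousAt.continuousWithinAt) (fun t _ => (hφ t).hasDerivWithinAt) ha
    (fun t _ => (hB t).continuousAt.continuousWithinAt) (fun t _ => (hB t).hasDerivWithinAt) hle

theorem image_one_le_taylor_of_second_deriv_le {φ φ₁ φ₂ : ℝ → ℝ} {M : ℝ}
    (hφ : ∀ t, HasDerivAt φ (φ₁ t) t) (hφ₁ : ∀ t, HasDerivAt φ₁ (φ₂ t) t)
    (hφ₂ : ∀ t ∈ Ico (0 : ℝ) 1, φ₂ t ≤ φ₂ 0 + M * t) :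
    φ 1 ≤ φ 0 + φ₁ 0 + φ₂ 0 / 2 + M / 6 := by
  have hφ₁_le : ∀ t ∈ Icc (0 : ℝ) 1, φ₁ t ≤ φ₁ 0 + φ₂ 0 * t + M / 2 * t ^ 2 := by
    refine image_le_of_hasDerivAt_le hφ₁ (fun t => ?_) (by simp) hφ₂
    exact ((((hasDerivAt_id' t).const_mul _).const_add _).fun_add
      ((hasDerivAt_pow 2 t).const_mul _)).congr_deriv (by norm_num; ring)
  have hφ_le : ∀ t ∈ Icc (0 : ℝ) 1,
      φ t ≤ φ 0 + φ₁ 0 * t + φ₂ 0 / 2 * t ^ 2 + M / 6 * t ^ 3 := by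
    refine image_le_of_hasDerivAt_le hφ (fun t => ?_) (by simp)
      (fun t ht => hφ₁_le t (Ico_subset_Icc_self ht))
    exact (((((hasDerivAt_id' t).const_mul _).const_add _).fun_add
      ((hasDerivAt_pow 2 t).const_mul _)).fun_add
      ((hasDerivAt_pow 3 t).const_mul _)).congr_deriv (by norm_num; ring)
  simpa using hφ_le 1 (by simp)

section Hessian

variable {E : Type*} [NormedAddCommGroup E] [InnerProductSpace ℝ E]

theorem inner_apply_self_sub_le_opNorm_sub_mul_sq (A B : E →L[ℝ] E) (u : E) :
    ⟪A u, u⟫ - ⟪B u, u⟫ ≤ ‖A - B‖ * ‖u‖ ^ 2 :=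
  calc ⟪A u, u⟫ - ⟪B u, u⟫ = ⟪(A - B) u, u⟫ := by simp only [sub_apply, inner_sub_left]
    _ ≤ ‖(A - B) u‖ * ‖u‖ := real_inner_le_norm _ _
    _ ≤ ‖A - B‖ * ‖u‖ * ‖u‖ := by gcongr; exact (A - B).le_opNorm u
    _ = ‖A - B‖ * ‖u‖ ^ 2 := by ring

variable [CompleteSpace E] {f : E → ℝ} {L : ℝ} {x : E}

theorem ContDiff.differentiable_gradient (hf : ContDiff ℝ 2 f) : Differentiable ℝ (gradient f) :=
  (InnerProductSpace.toDual ℝ E).symm.toContinuousLinearEquiv.differentiable.comp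
    ((hf.fderiv_right (m := 1) (by norm_num)).differentiable one_ne_zero)

theorem le_add_inner_gradient_add_hessian
    (hf : Differentiable ℝ f) (hgrad : Differentiable ℝ (gradient f))
    (hlip : ∀ y, ‖fderiv ℝ (gradient f) y - fderiv ℝ (gradient f) x‖ ≤ L * ‖y - x‖) (u : E) :
    f (x + u) ≤ f x + ⟪gradient f x, u⟫ + ⟪fderiv ℝ (gradient f) x u, u⟫ / 2
      + L * ‖u‖ ^ 3 / 6 := by
  set H := fderiv ℝ (gradient f)
  have hline : ∀ t : ℝ, HasDerivAt (fun s : ℝ => x + s • u) u t := fun t => by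
    simpa using ((hasDerivAt_id t).smul_const u).const_add x
  have hφ : ∀ t : ℝ, HasDerivAt (fun s : ℝ => f (x + s • u)) ⟪gradient f (x + t • u), u⟫ t :=
    fun t => by
      rw [inner_gradient_left]
      exact (hf _).hasFDerivAt.comp_hasDerivAt t (hline t)
  have hφ₁ : ∀ t : ℝ, HasDerivAt (fun s : ℝ => ⟪gradient f (x + s • u), u⟫)
      ⟪H (x + t • u) u, u⟫ t := fun t => by
    simpa using ((hgrad _).hasFDerivAt.comp_hasDerivAt t (hline t)).inner ℝ (hasDerivAt_const t u)
  have hφ₂ : ∀ t ∈ Ico (0 : ℝ) 1,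
      ⟪H (x + t • u) u, u⟫ ≤ ⟪H (x + (0 : ℝ) • u) u, u⟫ + L * ‖u‖ ^ 3 * t := by
    intro t ht
    rw [zero_smul, add_zero]
    calc ⟪H (x + t • u) u, u⟫
        ≤ ⟪H x u, u⟫ + ‖H (x + t • u) - H x‖ * ‖u‖ ^ 2 := by
          linarith [inner_apply_self_sub_le_opNorm_sub_mul_sq (H (x + t • u)) (H x) u]
      _ ≤ ⟪H x u, u⟫ + L * ‖t • u‖ * ‖u‖ ^ 2 := by
          gcongr; simpa using hlip (x + t • u)
      _ = ⟪H x u, u⟫ + L * ‖u‖ ^ 3 * t := by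
          rw [norm_smul, Real.norm_of_nonneg ht.1]; ring
  simpa using image_one_le_taylor_of_second_deriv_le hφ hφ₁ hφ₂

end Hessian

theorem abs_sgn (t : ℝ) : |sgn t| = 1 := by
  unfold sgn; split_ifs <;> norm_num

theorem sgn_mul_self (t : ℝ) : sgn t * t = |t| := by
  unfold sgn; split_ifs with ht
  · rw [one_mul, abs_of_nonneg ht]
  · rw [neg_one_mul, abs_of_neg (not_le.mp ht)]

/-- objective decrease of a single negative-curvature step. -/
theorem negative_curvature_step_decrease {d : ℕ}
    (f : EuclideanSpace ℝ (Fin d) → ℝ) (L2 : ℝ) (hL2 : 0 < L2)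
    (hf : ContDiff ℝ 2 f)
    (hHlip : ∀ a b : EuclideanSpace ℝ (Fin d),
      ‖fderiv ℝ (gradient f) a - fderiv ℝ (gradient f) b‖ ≤ L2 * ‖a - b‖)
    (x v : EuclideanSpace ℝ (Fin d)) (hv : ‖v‖ = 1)
    (hneg : ⟪(fderiv ℝ (gradient f) x) v, v⟫ ≤ 0)
    (η : ℝ)
    (hη : η = (2 * |⟪(fderiv ℝ (gradient f) x) v, v⟫| / L2) * sgn ⟪gradient f x, v⟫)
    (xp : EuclideanSpace ℝ (Fin d)) (hxp : xp = x - η • v) :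
    f x - f xp ≥ 2 * |⟪(fderiv ℝ (gradient f) x) v, v⟫| ^ 3 / (3 * L2 ^ 2) := by
  set μ := |⟪(fderiv ℝ (gradient f) x) v, v⟫| with hμ
  set c := 2 * μ / L2
  have hcurv : ⟪(fderiv ℝ (gradient f) x) v, v⟫ = -μ := by rw [hμ, abs_of_nonpos hneg, neg_neg]
  have hη_abs : |η| = c := by rw [hη, abs_mul, abs_sgn, mul_one, abs_of_nonneg (by positivity)]
  have htaylor := le_add_inner_gradient_add_hessian (hf.differentiable two_ne_zero)
    hf.differentiable_gradient (fun y => hHlip y x) ((-η) • v)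
  rw [neg_smul, ← sub_eq_add_neg, ← hxp] at htaylor
  have hgrad : ⟪gradient f x, -(η • v)⟫ = -(c * |⟪gradient f x, v⟫|) := by
    rw [inner_neg_right, real_inner_smul_right, hη, mul_assoc, sgn_mul_self]
  have hhess : ⟪fderiv ℝ (gradient f) x (-(η • v)), -(η • v)⟫ = -(μ * c ^ 2) := by
    rw [map_neg, inner_neg_neg, map_smul, real_inner_smul_left, real_inner_smul_right, hcurv,
      ← mul_assoc, ← sq, ← sq_abs, hη_abs]
    ring
  have hnorm : ‖-(η • v)‖ = c := by
    rw [norm_neg, norm_smul, hv, mul_one, Real.norm_eq_abs, hη_abs]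
  have hmodel : -(μ * c ^ 2) / 2 + L2 * c ^ 3 / 6 = -(2 * μ ^ 3 / (3 * L2 ^ 2)) := by
    simp only [c]; field_simp; ring
  rw [hgrad, hhess, hnorm] at htaylor
  linarith [mul_nonneg (by positivity : 0 ≤ c) (abs_nonneg ⟪gradient f x, v⟫)]
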